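/- Fix n ≥ 1, a directed graph G = (V, E) on the node set V = {x_1, …, x_n}, a monoid (M, ⊗, 1̄), and edge weights wt(x_i, x_j) ∈ M for each edge (x_i, x_j) ∈ E, and let G' be the weighted directed graph of the construction described in the context. Then for every pair of nodes x_i, x_j ∈ V and every z ∈ M: there exists a path P from x_i to x_j in G with ⊗(P) = z if and only if there exists a path P' from ⟨x_i, x_i⟩ to ⟨x_j, x_j⟩ in G' with ⊗(P') = z. -/

import Mathlib

/-- A path from `u` to `v` in the directed graph with edge relation `E`. -/
def IsPath {V : Type*} (E : V → V → Prop) (u v : V) (l : List V) : Prop :=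
  l ≠ [] ∧ l.head? = some u ∧ l.getLast? = some v ∧ l.Chain' E

/-- The weight of a path: the ordered product of the weights of its edges,
`1` for a 0-length path. -/
def pathWeight {V M : Type*} [Monoid M] (wt : V → V → M) (l : List V) : M :=
  ((l.zip l.tail).map fun p => wt p.1 p.2).prod

/-- Nodes of the graph G'': `Sum.inl i` is x_{i+1}, `Sum.inr i` is y_{i+1}. -/
abbrev DoubleV (n : ℕ) := Fin n ⊕ Fin n

/-- Nodes of the product graph G': pairs of nodes of G''. -/
abbrev ProdV (n : ℕ) := DoubleV n × DoubleV n

/-- The edge relation of the product graph G' of the construction: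
black edges ⟨x_i,y_j⟩ ↔ ⟨x_i,y_{j±1}⟩ and ⟨y_i,x_j⟩ ↔ ⟨y_{i±1},x_j⟩;
blue edges ⟨x_i,x_i⟩ → ⟨x_i,y_i⟩ and ⟨y_i,x_i⟩ → ⟨x_i,x_i⟩;
red edges ⟨x_i,y_j⟩ → ⟨x_i,x_j⟩ for (x_i,x_j) ∈ E;
green edges ⟨x_i,x_j⟩ → ⟨y_i,x_j⟩ for i ≠ j. -/
def prodE {n : ℕ} (E : Fin n → Fin n → Prop) : ProdV n → ProdV n → Prop :=
  fun a b =>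
    match a, b with
    | (Sum.inl i, Sum.inr j), (Sum.inl i', Sum.inr j') =>
        i = i' ∧ ((j : ℕ) + 1 = (j' : ℕ) ∨ (j' : ℕ) + 1 = (j : ℕ))   -- black
    | (Sum.inr i, Sum.inl j), (Sum.inr i', Sum.inl j') =>
        j = j' ∧ ((i : ℕ) + 1 = (i' : ℕ) ∨ (i' : ℕ) + 1 = (i : ℕ))   -- black
    | (Sum.inl i, Sum.inl j), (Sum.inl i', Sum.inr j') =>
        i = j ∧ i' = i ∧ j' = i                                       -- blue
    | (Sum.inr i, Sum.inl j), (Sum.inl i', Sum.inl j') =>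
        i = j ∧ i' = i ∧ j' = i                                       -- blue
    | (Sum.inl i, Sum.inr j), (Sum.inl i', Sum.inl j') =>
        E i j ∧ i' = i ∧ j' = j                                       -- red
    | (Sum.inl i, Sum.inl j), (Sum.inr i', Sum.inl j') =>
        i ≠ j ∧ i' = i ∧ j' = j                                       -- green
    | _, _ => False

/-- The weight function of the product graph G': the red edge ⟨x_i,y_j⟩ → ⟨x_i,x_j⟩ has
weight wt(x_i, x_j); every other edge has weight 1̄. -/
def prodWt {n : ℕ} {M : Type*} [Monoid M] (wt : Fin n → Fin n → M) :
    ProdV n → ProdV n → M :=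
  fun a b =>
    match a, b with
    | (Sum.inl i, Sum.inr _), (Sum.inl _, Sum.inl j) => wt i j
    | _, _ => 1

/-!
Inside `G'` the node `⟨x_a, x_a⟩` simulates the node `x_a` of `G`. An edge `(x_a, x_b)` of `G`
is traced by the walk `⟨x_a,x_a⟩ → ⟨x_a,y_a⟩ →* ⟨x_a,y_b⟩ → ⟨x_a,x_b⟩ → ⟨y_a,x_b⟩ →* ⟨y_b,x_b⟩ →
⟨x_b,x_b⟩` (blue, black, red, green, black, blue), whose only non-trivial weight is the red
`wt(x_a, x_b)`; for `a = b`, where there is no green edge, it stops at `⟨x_a,x_b⟩`.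
Conversely, project `⟨x_a,y_b⟩ ↦ x_a` and `⟨x_a,x_b⟩, ⟨y_a,x_b⟩ ↦ x_b`: every black, blue and
green edge has weight `1̄` and collapses to a single node, and every red edge projects to an
edge of `G` of the same weight, so walks in `G'` project to walks in `G`.
-/

inductive Reach {V M : Type*} [Monoid M] (E : V → V → Prop) (wt : V → V → M) :
    V → V → M → Prop
  | refl (u : V) : Reach E wt u u 1
  | cons {u v w : V} {z : M} : E u v → Reach E wt v w z → Reach E wt u w (wt u v * z)

namespace Reach

variable {V W M : Type*} [Monoid M] {E : V → V → Prop} {wt : V → V → M}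

theorem trans {u v w : V} {z₁ z₂ : M} (h₁ : Reach E wt u v z₁) (h₂ : Reach E wt v w z₂) :
    Reach E wt u w (z₁ * z₂) := by
  induction h₁ with
  | refl => rwa [one_mul]
  | cons he _ ih => rw [mul_assoc]; exact cons he (ih h₂)

theorem cons_of_wt_eq_one {u v w : V} {z : M} (he : E u v) (hwt : wt u v = 1)
    (h : Reach E wt v w z) : Reach E wt u w z := by
  simpa [hwt] using cons he h

theorem trans_one {u v w : V} {z : M} (h₁ : Reach E wt u v 1) (h₂ : Reach E wt v w z) :
    Reach E wt u w z := by
  simpa using h₁.trans h₂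

theorem one_trans {u v w : V} {z : M} (h₁ : Reach E wt u v z) (h₂ : Reach E wt v w 1) :
    Reach E wt u w z := by
  simpa using h₁.trans h₂

theorem of_fin_chain {n : ℕ} {f : Fin n → V}
    (hf : ∀ p q : Fin n, (p : ℕ) + 1 = q ∨ (q : ℕ) + 1 = p → E (f p) (f q) ∧ wt (f p) (f q) = 1)
    (p q : Fin n) : Reach E wt (f p) (f q) 1 := by
  suffices key : ∀ k, ∀ p q : Fin n, (p : ℕ) + k = q →
      Reach E wt (f p) (f q) 1 ∧ Reach E wt (f q) (f p) 1 by
    rcases le_total (p : ℕ) q with h | h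
    · exact (key _ p q (Nat.add_sub_cancel' h)).1
    · exact (key _ q p (Nat.add_sub_cancel' h)).2
  intro k
  induction k with
  | zero =>
    intro p q h
    obtain rfl : p = q := Fin.ext h
    exact ⟨refl _, refl _⟩
  | succ k ih =>
    intro p q h
    let p' : Fin n := ⟨p + 1, by omega⟩
    obtain ⟨hpq, hqp⟩ := ih p' q (by simp only [p']; omega)
    obtain ⟨hE, hwt⟩ := hf p p' (Or.inl rfl)
    obtain ⟨hE', hwt'⟩ := hf p' p (Or.inr rfl)
    exact ⟨cons_of_wt_eq_one hE hwt hpq, hqp.one_trans (cons_of_wt_eq_one hE' hwt' (refl _))⟩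

theorem map {E' : W → W → Prop} {wt' : W → W → M} (φ : V → W)
    (hφ : ∀ u v, E u v →
      (φ u = φ v ∧ wt u v = 1) ∨ (E' (φ u) (φ v) ∧ wt' (φ u) (φ v) = wt u v))
    {u v : V} {z : M} (h : Reach E wt u v z) : Reach E' wt' (φ u) (φ v) z := by
  induction h with
  | refl => exact refl _
  | @cons u v w z he _ ih =>
    rcases hφ u v he with ⟨hφuv, hwt⟩ | ⟨hE', hwt'⟩
    · rwa [hwt, one_mul, hφuv]
    · rw [← hwt']; exact cons hE' ih

end Reach

section Paths

variable {V M : Type*} [Monoid M] {E : V → V → Prop} {wt : V → V → M}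

theorem pathWeight_cons_cons (wt : V → V → M) (a b : V) (l : List V) :
    pathWeight wt (a :: b :: l) = wt a b * pathWeight wt (b :: l) := by
  simp [pathWeight]

theorem isPath_cons_cons_iff {u v b : V} {l : List V} :
    IsPath E u v (u :: b :: l) ↔ E u b ∧ IsPath E b v (b :: l) := by
  constructor
  · rintro ⟨-, -, hv, hc⟩
    obtain ⟨hE, hc⟩ := List.isChain_cons_cons.mp hc
    exact ⟨hE, by simp, rfl, by simpa using hv, hc⟩
  · rintro ⟨hE, -, -, hv, hc⟩
    exact ⟨by simp, rfl, by simpa using hv, List.isChain_cons_cons.mpr ⟨hE, hc⟩⟩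

theorem Reach.of_isPath : ∀ {l : List V} {u v : V}, IsPath E u v l →
    Reach E wt u v (pathWeight wt l)
  | [], _, _, h => absurd rfl h.1
  | [a], u, v, ⟨_, hu, hv, _⟩ => by
    obtain rfl : a = u := by simpa using hu
    obtain rfl : a = v := by simpa using hv
    simpa [pathWeight] using Reach.refl (E := E) (wt := wt) a
  | a :: b :: l, u, v, h => by
    obtain rfl : a = u := by simpa using h.2.1
    obtain ⟨hE, hl⟩ := isPath_cons_cons_iff.mp h
    rw [pathWeight_cons_cons]
    exact .cons hE (of_isPath hl)

theorem Reach.exists_isPath {u v : V} {z : M} (h : Reach E wt u v z) :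
    ∃ l, IsPath E u v l ∧ pathWeight wt l = z := by
  induction h with
  | refl u => exact ⟨[u], ⟨by simp, rfl, rfl, List.isChain_singleton u⟩, by simp [pathWeight]⟩
  | @cons u _ _ _ he _ ih =>
    obtain ⟨_ | ⟨b, l⟩, hl, rfl⟩ := ih
    · exact absurd rfl hl.1
    obtain rfl : b = _ := by simpa using hl.2.1
    exact ⟨u :: b :: l, isPath_cons_cons_iff.mpr ⟨he, hl⟩, pathWeight_cons_cons wt u b l⟩

theorem exists_isPath_pathWeight_iff_reach (u v : V) (z : M) :
    (∃ l, IsPath E u v l ∧ pathWeight wt l = z) ↔ Reach E wt u v z :=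
  ⟨fun ⟨_, hl, hz⟩ => hz ▸ .of_isPath hl, Reach.exists_isPath⟩

end Paths

section ProductGraph

variable {n : ℕ} {M : Type*} [Monoid M] {E : Fin n → Fin n → Prop} {wt : Fin n → Fin n → M}

theorem reach_inl_inr (a p q : Fin n) :
    Reach (prodE E) (prodWt wt) (Sum.inl a, Sum.inr p) (Sum.inl a, Sum.inr q) 1 :=
  Reach.of_fin_chain (f := fun k => (Sum.inl a, Sum.inr k)) (fun _ _ h => ⟨⟨rfl, h⟩, rfl⟩) p q

theorem reach_inr_inl (b p q : Fin n) :
    Reach (prodE E) (prodWt wt) (Sum.inr p, Sum.inl b) (Sum.inr q, Sum.inl b) 1 :=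
  Reach.of_fin_chain (f := fun k => (Sum.inr k, Sum.inl b)) (fun _ _ h => ⟨⟨rfl, h⟩, rfl⟩) p q

theorem reach_diag_of_inl_inl (a b : Fin n) :
    Reach (prodE E) (prodWt wt) (Sum.inl a, Sum.inl b) (Sum.inl b, Sum.inl b) 1 := by
  by_cases hab : a = b
  · subst hab; exact .refl _
  · refine .cons_of_wt_eq_one (v := (Sum.inr a, Sum.inl b)) ⟨hab, rfl, rfl⟩ rfl ?_
    exact (reach_inr_inl b a b).trans_one
      (.cons_of_wt_eq_one (v := (Sum.inl b, Sum.inl b)) ⟨rfl, rfl, rfl⟩ rfl (.refl _))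

theorem reach_diag_of_edge {a b : Fin n} (hE : E a b) :
    Reach (prodE E) (prodWt wt) (Sum.inl a, Sum.inl a) (Sum.inl b, Sum.inl b) (wt a b) := by
  refine .cons_of_wt_eq_one (v := (Sum.inl a, Sum.inr a)) ⟨rfl, rfl, rfl⟩ rfl ?_
  refine (reach_inl_inr a a b).trans_one ?_
  simpa [prodWt] using Reach.cons (u := (Sum.inl a, Sum.inr b)) (v := (Sum.inl a, Sum.inl b))
    (wt := prodWt wt) ⟨hE, rfl, rfl⟩ (reach_diag_of_inl_inl a b)

theorem reach_diag_of_reach {i j : Fin n} {z : M} (h : Reach E wt i j z) :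
    Reach (prodE E) (prodWt wt) (Sum.inl i, Sum.inl i) (Sum.inl j, Sum.inl j) z := by
  induction h with
  | refl => exact .refl _
  | cons hE _ ih => exact (reach_diag_of_edge hE).trans ih

-- `⟨y_a, y_b⟩` lies on no edge of `G'`, so its image is arbitrary.
def prodProj : ProdV n → Fin n
  | (Sum.inl a, Sum.inr _) => a
  | (Sum.inr a, Sum.inr _) => a
  | (_, Sum.inl b) => b

theorem prodProj_of_prodE {u v : ProdV n} (h : prodE E u v) :
    (prodProj u = prodProj v ∧ prodWt wt u v = 1) ∨
      (E (prodProj u) (prodProj v) ∧ wt (prodProj u) (prodProj v) = prodWt wt u v) := by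
  rcases u with ⟨a | a, b | b⟩ <;> rcases v with ⟨c | c, d | d⟩ <;>
    simp only [prodE] at h <;> first
    | exact h.elim
    | (obtain ⟨rfl, -⟩ := h; exact .inl ⟨rfl, rfl⟩)
    | (obtain ⟨-, rfl, rfl⟩ := h; exact .inl ⟨rfl, rfl⟩)
    | (obtain ⟨rfl, rfl, rfl⟩ := h; exact .inl ⟨rfl, rfl⟩)
    | (obtain ⟨hE, rfl, rfl⟩ := h; exact .inr ⟨hE, rfl⟩)

theorem reach_of_reach_diag {i j : Fin n} {z : M}
    (h : Reach (prodE E) (prodWt wt) (Sum.inl i, Sum.inl i) (Sum.inl j, Sum.inl j) z) :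
    Reach E wt i j z :=
  Reach.map prodProj (fun _ _ => prodProj_of_prodE) h

end ProductGraph

theorem stmt_14_general {M : Type*} [Monoid M] (n : ℕ)
    (E : Fin n → Fin n → Prop) (wt : Fin n → Fin n → M) (i j : Fin n) (z : M) :
    (∃ l : List (Fin n), IsPath E i j l ∧ pathWeight wt l = z) ↔
    (∃ l' : List (ProdV n),
        IsPath (prodE E) (Sum.inl i, Sum.inl i) (Sum.inl j, Sum.inl j) l' ∧
        pathWeight (prodWt wt) l' = z) := by
  rw [exists_isPath_pathWeight_iff_reach, exists_isPath_pathWeight_iff_reach]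
  exact ⟨reach_diag_of_reach, reach_of_reach_diag⟩

/-- For every pair of nodes x_i, x_j of G and every z ∈ M: there is a path
P from x_i to x_j in G with ⊗(P) = z iff there is a path P' from ⟨x_i, x_i⟩ to
⟨x_j, x_j⟩ in G' with ⊗(P') = z. -/
theorem stmt_14 {M : Type*} [Monoid M] (n : ℕ) (hn : 1 ≤ n)
    (E : Fin n → Fin n → Prop) (wt : Fin n → Fin n → M) (i j : Fin n) (z : M) :
    (∃ l : List (Fin n), IsPath E i j l ∧ pathWeight wt l = z) ↔
    (∃ l' : List (ProdV n),
        IsPath (prodE E) (Sum.inl i, Sum.inl i) (Sum.inl j, Sum.inl j) l' ∧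
        pathWeight (prodWt wt) l' = z) :=
  stmt_14_general n E wt i j z
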